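/- Let R be a unique factorization domain with fraction field K and let T = Σ_{i,j} t_{i,j} x^i y^j ∈ R[x,y] be an (n,r)-Brylawski polynomial with some constant c ∈ R∖{0}, where n, r are integers with r ≥ 1 and n − r ≥ 1. Assume: (i) neither x − 1 nor y − 1 divides T in R[x,y]; (ii) t_{1,0} ≠ 0; (iii) deg_x T + deg_y T ∈ {n, n+1} (equivalently, deg_x T + deg_y T ≤ n+1). Then whenever T = U·V with U, V ∈ R[x,y], one of U, V is a constant polynomial (an element of R); in particular T, viewed as an element of K[x,y], is irreducible. -/

import Mathlib

open Polynomial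

/-- Evaluation `U(Y/(Y−1), Y)` in the rational function field over the fraction field of `R`. -/
noncomputable def brylEval (R : Type*) [CommRing R] [IsDomain R]
    (U : Polynomial (Polynomial R)) : RatFunc (FractionRing R) :=
  Polynomial.eval₂
    ((algebraMap (Polynomial (FractionRing R)) (RatFunc (FractionRing R))).comp
      (Polynomial.mapRingHom (algebraMap R (FractionRing R))))
    (RatFunc.X / (RatFunc.X - 1)) U

/-- `U ∈ (R[y])[x]` is an `(n,r)`-Brylawski polynomial with constant `c`, i.e.
`(Y−1)^r · U(Y/(Y−1), Y) = c·Y^n` holds in `K(Y)`, `K` the fraction field of `R`. -/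
noncomputable def IsBrylawski (R : Type*) [CommRing R] [IsDomain R] (n : ℕ) (r : ℤ) (c : R)
    (U : Polynomial (Polynomial R)) : Prop :=
  (RatFunc.X - 1 : RatFunc (FractionRing R)) ^ r * brylEval R U
    = RatFunc.C (algebraMap R (FractionRing R) c) * RatFunc.X ^ n

/-- `deg_y` of a bivariate polynomial in `(R[y])[x]`: the largest `j` such that some
coefficient `u_{i,j}` is nonzero. -/
noncomputable def degY {R : Type*} [CommRing R] (U : Polynomial (Polynomial R)) : ℕ :=
  U.support.sup fun i => (U.coeff i).natDegree

/-!
For `U ∈ R[x,y]` let `brylNumerator U := (Y - 1) ^ deg_x U · U(Y/(Y-1), Y) ∈ K[Y]`. It is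
multiplicative, has degree at most `deg_x U + deg_y U`, its value at `0` is `±u_{0,0}` and its
value at `1` is the leading `x`-coefficient of `U` evaluated at `y = 1`; the Brylawski identity
says `brylNumerator T · (Y - 1) ^ r = c Y ^ n (Y - 1) ^ deg_x T`.

If `T = U V`, then `t_{1,0} = u_{0,0} v_{1,0} + u_{1,0} v_{0,0} ≠ 0` lets us assume
`u_{0,0} ≠ 0`. Then `brylNumerator U` is prime to `Y`, so it is associated to a power of
`Y - 1`, and `Y ^ n` divides `brylNumerator V`. Hence `deg_x V + deg_y V ≥ n` and
`deg_x U + deg_y U ≤ 1`, so a nonconstant `U` lies in `R[x]` or in `R[y]`, and the shape of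
`brylNumerator U` forces `x - 1 ∣ U` or `y - 1 ∣ U`. Irreducibility over `K` follows by clearing
denominators and cancelling prime constants of `R` one at a time, as in Gauss's lemma.
-/

section Bivariate

variable {R : Type*} [CommRing R]

def IsScalar (U : R[X][X]) : Prop := ∃ a : R, U = C (C a)

lemma IsScalar.C_C_mul {U : R[X][X]} (hU : IsScalar U) (a : R) : IsScalar (C (C a) * U) := by
  obtain ⟨b, rfl⟩ := hU
  exact ⟨a * b, by simp⟩

lemma natDegree_coeff_le_degY (U : R[X][X]) (i : ℕ) : (U.coeff i).natDegree ≤ degY U := by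
  by_cases hi : U.coeff i = 0
  · simp [hi]
  · exact Finset.le_sup (f := fun i => (U.coeff i).natDegree) (mem_support_iff.mpr hi)

lemma natDegree_eval_one_le_degY (U : R[X][X]) : (U.eval 1).natDegree ≤ degY U := by
  rw [eval_eq_sum_range]
  exact natDegree_sum_le_of_forall_le _ _ fun i _ => by simpa using natDegree_coeff_le_degY U i

lemma degY_C (p : R[X]) : degY (C p) = p.natDegree := by
  by_cases hp : p = 0 <;> simp [degY, hp, support_C]

lemma coeff_coeff_swap (U : R[X][X]) (i j : ℕ) :
    ((Bivariate.swap U).coeff j).coeff i = (U.coeff i).coeff j := by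
  induction U using Polynomial.induction_on' with
  | add p q hp hq => simp [hp, hq]
  | monomial k p =>
    induction p using Polynomial.induction_on' with
    | add p q hp hq => simp_all [map_add]
    | monomial m a =>
      rw [Bivariate.swap_monomial_monomial]
      by_cases hm : m = j <;> by_cases hk : k = i <;> simp [coeff_monomial, hm, hk]

lemma natDegree_swap (U : R[X][X]) : (Bivariate.swap U).natDegree = degY U := by
  refine le_antisymm (natDegree_le_iff_coeff_eq_zero.2 fun j hj => ?_)
    (Finset.sup_le fun i hi => ?_)
  · ext i
    rw [coeff_coeff_swap, coeff_zero]
    exact coeff_eq_zero_of_natDegree_lt ((natDegree_coeff_le_degY U i).trans_lt hj)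
  · refine le_natDegree_of_ne_zero fun h => leadingCoeff_ne_zero.2 (mem_support_iff.1 hi) ?_
    rw [leadingCoeff, ← coeff_coeff_swap, h, coeff_zero]

lemma degY_mul [IsDomain R] {U V : R[X][X]} (hU : U ≠ 0) (hV : V ≠ 0) :
    degY (U * V) = degY U + degY V := by
  simp only [← natDegree_swap, map_mul]
  exact natDegree_mul ((map_ne_zero_iff _ Bivariate.swap.injective).2 hU)
    ((map_ne_zero_iff _ Bivariate.swap.injective).2 hV)

lemma isScalar_of_natDegree_eq_zero_of_degY_eq_zero {U : R[X][X]} (hx : U.natDegree = 0)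
    (hy : degY U = 0) : IsScalar U :=
  ⟨_, (eq_C_of_natDegree_eq_zero hx).trans (congrArg C (eq_C_of_natDegree_eq_zero
    (Nat.eq_zero_of_le_zero (hy ▸ natDegree_coeff_le_degY U 0))))⟩

lemma coeff_one_coeff_zero_mul (U V : R[X][X]) :
    ((U * V).coeff 1).coeff 0 =
      (U.coeff 0).coeff 0 * (V.coeff 1).coeff 0 + (U.coeff 1).coeff 0 * (V.coeff 0).coeff 0 := by
  simp [coeff_mul, Finset.Nat.antidiagonal_succ]

lemma forall_isScalar_of_C_C_mul_eq [IsDomain R] [UniqueFactorizationMonoid R] {T : R[X][X]}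
    (hT : ∀ U V, T = U * V → IsScalar U ∨ IsScalar V) (d : R) :
    ∀ U V, C (C d) * T = U * V → IsScalar U ∨ IsScalar V := by
  induction d using UniqueFactorizationMonoid.induction_on_prime with
  | h₁ =>
    intro U V h
    rcases (by simpa using h.symm : U = 0 ∨ V = 0) with rfl | rfl
    · exact Or.inl ⟨0, by simp⟩
    · exact Or.inr ⟨0, by simp⟩
  | h₂ u hu =>
    intro U V h
    obtain ⟨w, rfl⟩ := hu
    have hT' : T = C (C ((w⁻¹ : Rˣ) : R)) * U * V := by
      rw [mul_assoc, ← h, ← mul_assoc, ← map_mul, ← map_mul, Units.inv_mul, map_one, map_one,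
        one_mul]
    refine (hT _ _ hT').imp_left fun hU => ?_
    simpa [← mul_assoc, ← map_mul] using hU.C_C_mul w
  | h₃ a p _ hp ih =>
    intro U V h
    have hp' : Prime (C (C p) : R[X][X]) := prime_C_iff.2 (prime_C_iff.2 hp)
    have hdvd : C (C p) ∣ U * V := ⟨C (C a) * T, by rw [← h, map_mul, map_mul, mul_assoc]⟩
    rcases hp'.dvd_or_dvd hdvd with ⟨U₂, rfl⟩ | ⟨V₂, rfl⟩
    · refine (ih U₂ V (mul_left_cancel₀ hp'.ne_zero ?_)).imp_left (IsScalar.C_C_mul · p)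
      rw [← mul_assoc, ← map_mul, ← map_mul, h, mul_assoc]
    · refine (ih U V₂ (mul_left_cancel₀ hp'.ne_zero ?_)).imp_right (IsScalar.C_C_mul · p)
      rw [← mul_assoc, ← map_mul, ← map_mul, h, mul_left_comm]

end Bivariate

section Numerator

variable {R : Type*} [CommRing R]

local notation "K" => FractionRing R

noncomputable def brylNumerator (U : R[X][X]) : K[X] :=
  ∑ i ∈ Finset.range (U.natDegree + 1),
    (U.coeff i).map (algebraMap R K) * X ^ i * (X - 1) ^ (U.natDegree - i)

lemma RatFunc.X_sub_one_ne_zero {F : Type*} [Field F] : (RatFunc.X - 1 : RatFunc F) ≠ 0 := by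
  rw [← RatFunc.algebraMap_X, ← map_one (algebraMap F[X] (RatFunc F)), ← map_sub]
  exact (map_ne_zero_iff _ (IsFractionRing.injective F[X] (RatFunc F))).2 (X_sub_C_ne_zero 1)

lemma algebraMap_brylNumerator [IsDomain R] (U : R[X][X]) :
    algebraMap K[X] (RatFunc K) (brylNumerator U) =
      (RatFunc.X - 1) ^ U.natDegree * brylEval R U := by
  rw [brylEval, eval₂_eq_sum_range, brylNumerator, map_sum, Finset.mul_sum]
  refine Finset.sum_congr rfl fun i hi => ?_
  have hi : i ≤ U.natDegree := Nat.lt_succ_iff.1 (Finset.mem_range.1 hi)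
  have hX1 := RatFunc.X_sub_one_ne_zero (F := K)
  simp only [map_mul, map_pow, map_sub, map_one, RatFunc.algebraMap_X, RingHom.comp_apply,
    coe_mapRingHom, div_pow]
  field_simp
  rw [mul_assoc _ ((RatFunc.X - 1) ^ _), ← pow_add, Nat.sub_add_cancel hi]

lemma brylNumerator_mul [IsDomain R] {U V : R[X][X]} (hU : U ≠ 0) (hV : V ≠ 0) :
    brylNumerator (U * V) = brylNumerator U * brylNumerator V := by
  apply IsFractionRing.injective K[X] (RatFunc K)
  simp only [map_mul, algebraMap_brylNumerator, brylEval, eval₂_mul, natDegree_mul hU hV, pow_add]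
  ring

lemma brylNumerator_C (p : R[X]) : brylNumerator (C p) = p.map (algebraMap R K) := by
  simp [brylNumerator]

lemma natDegree_brylNumerator_le [IsDomain R] (U : R[X][X]) :
    (brylNumerator U).natDegree ≤ U.natDegree + degY U := by
  refine natDegree_sum_le_of_forall_le _ _ fun i hi => ?_
  have hi : i ≤ U.natDegree := Nat.lt_succ_iff.1 (Finset.mem_range.1 hi)
  refine natDegree_mul_le.trans ?_
  have h1 := (natDegree_mul_le (p := (U.coeff i).map (algebraMap R K)) (q := X ^ i)).trans
    (add_le_add (natDegree_map_le.trans (natDegree_coeff_le_degY U i)) (natDegree_X_pow_le i))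
  have h2 : ((X - 1 : K[X]) ^ (U.natDegree - i)).natDegree ≤ U.natDegree - i := by
    simpa using natDegree_pow_le_of_le (U.natDegree - i) (natDegree_X_sub_C_le (1 : K))
  omega

lemma coeff_zero_brylNumerator [IsDomain R] (U : R[X][X]) :
    (brylNumerator U).coeff 0 = (-1) ^ U.natDegree * algebraMap R K ((U.coeff 0).coeff 0) := by
  rw [coeff_zero_eq_eval_zero, brylNumerator, eval_finsetSum,
    Finset.sum_eq_single_of_mem 0 (by simp) fun i _ hi => by simp [zero_pow hi]]
  simp [coeff_zero_eq_eval_zero, eval_map, eval₂_at_zero, mul_comm]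

lemma eval_one_brylNumerator [IsDomain R] (U : R[X][X]) :
    (brylNumerator U).eval 1 = algebraMap R K (U.leadingCoeff.eval 1) := by
  rw [brylNumerator, eval_finsetSum, Finset.sum_eq_single_of_mem U.natDegree (by simp)]
  · simp [eval_map, eval₂_at_one]
  · intro i hi hne
    have : U.natDegree - i ≠ 0 := by
      have := Finset.mem_range.1 hi
      omega
    simp [zero_pow this]

lemma coeff_natDegree_brylNumerator_of_degY_eq_zero [IsDomain R] {U : R[X][X]}
    (h : degY U = 0) :
    (brylNumerator U).coeff U.natDegree = algebraMap R K ((U.eval 1).coeff 0) := by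
  rw [brylNumerator, finsetSum_coeff, eval_eq_sum_range, finsetSum_coeff, map_sum]
  refine Finset.sum_congr rfl fun i hi => ?_
  have hi : i ≤ U.natDegree := Nat.lt_succ_iff.1 (Finset.mem_range.1 hi)
  have hC : U.coeff i = C ((U.coeff i).coeff 0) :=
    eq_C_of_natDegree_eq_zero (Nat.eq_zero_of_le_zero (h ▸ natDegree_coeff_le_degY U i))
  have hm : (X - 1 : K[X]).Monic := by simpa using monic_X_sub_C (1 : K)
  have h1 : (X - 1 : K[X]).natDegree = 1 := by simpa using natDegree_X_sub_C (1 : K)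
  have hdeg : (X ^ i * (X - 1) ^ (U.natDegree - i) : K[X]).natDegree = U.natDegree := by
    rw [(monic_X_pow i).natDegree_mul (hm.pow _), natDegree_X_pow, hm.natDegree_pow, h1]
    omega
  have hcoeff : (X ^ i * (X - 1) ^ (U.natDegree - i) : K[X]).coeff U.natDegree = 1 := by
    simpa only [hdeg] using ((monic_X_pow i).mul (hm.pow (U.natDegree - i))).coeff_natDegree
  rw [hC, map_C, mul_assoc, coeff_C_mul, hcoeff]
  simp

end Numerator

section FieldPolynomial

variable {K : Type*} [Field K]

lemma isCoprime_X_of_coeff_zero_ne_zero {W : K[X]} (h : W.coeff 0 ≠ 0) : IsCoprime X W :=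
  irreducible_X.coprime_iff_not_dvd.2 (by rwa [X_dvd_iff])

lemma isCoprime_X_X_sub_one : IsCoprime (X : K[X]) (X - 1) := ⟨1, -1, by ring⟩

lemma exists_associated_X_sub_one_pow_of_dvd {W : K[X]} {n N : ℕ}
    (hW : W ∣ X ^ n * (X - 1) ^ N) (h0 : W.coeff 0 ≠ 0) : ∃ b, Associated W ((X - 1) ^ b) := by
  have := ((isCoprime_X_of_coeff_zero_ne_zero h0).symm.pow_right (n := n)).dvd_of_dvd_mul_left hW
  obtain ⟨b, -, hb⟩ := (dvd_prime_pow (prime_X_sub_C (1 : K)) N).1 (by simpa using this)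
  exact ⟨b, by simpa using hb⟩

lemma natDegree_eq_zero_or_eval_one_eq_zero {W : K[X]} {b : ℕ}
    (hW : Associated W ((X - 1) ^ b)) : W.natDegree = 0 ∨ W.eval 1 = 0 := by
  rcases Nat.eq_zero_or_pos b with rfl | hb
  · exact Or.inl (natDegree_eq_zero_of_isUnit (associated_one_iff_isUnit.1 (by simpa using hW)))
  · have : X - C 1 ∣ W := by simpa using (dvd_pow_self (X - 1 : K[X]) hb.ne').trans hW.symm.dvd
    exact Or.inr (dvd_iff_isRoot.1 this)

end FieldPolynomial

section Brylawski

variable {R : Type*} [CommRing R] [IsDomain R] {n : ℕ} {r : ℤ} {c : R} {T U V : R[X][X]}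

local notation "K" => FractionRing R

lemma IsBrylawski.brylNumerator_mul_X_sub_one_pow (hT : IsBrylawski R n r c T) :
    brylNumerator T * (X - 1) ^ r.toNat =
      C (algebraMap R K c) * X ^ n * (X - 1) ^ (T.natDegree + (-r).toNat) := by
  apply IsFractionRing.injective K[X] (RatFunc K)
  have hr : (RatFunc.X - 1 : RatFunc K) ^ r * (RatFunc.X - 1) ^ (-r).toNat =
      (RatFunc.X - 1) ^ r.toNat := by
    rw [← zpow_natCast, ← zpow_natCast, ← zpow_add₀ RatFunc.X_sub_one_ne_zero]
    congr 1
    omega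
  unfold IsBrylawski at hT
  simp only [map_mul, map_pow, map_sub, map_one, RatFunc.algebraMap_X, RatFunc.algebraMap_C,
    algebraMap_brylNumerator]
  rw [← hr, pow_add]
  linear_combination (RatFunc.X - 1) ^ T.natDegree * (RatFunc.X - 1) ^ (-r).toNat * hT

lemma IsBrylawski.exists_associated_and_le_natDegree (hc : c ≠ 0) (hT : IsBrylawski R n r c T)
    (hT0 : T ≠ 0) (hUV : T = U * V) (h0 : (brylNumerator U).coeff 0 ≠ 0) :
    (∃ b, Associated (brylNumerator U) ((X - 1) ^ b)) ∧ n ≤ (brylNumerator V).natDegree := by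
  obtain ⟨hU0, hV0⟩ := mul_ne_zero_iff.1 (hUV ▸ hT0)
  have key := hT.brylNumerator_mul_X_sub_one_pow
  rw [show T = U * V from hUV, brylNumerator_mul hU0 hV0, ← hUV] at key
  set N := T.natDegree + (-r).toNat
  have hc' : IsUnit (C (algebraMap R K c)) :=
    isUnit_C.2 (IsUnit.mk0 _ ((map_ne_zero_iff _ (IsFractionRing.injective R K)).2 hc))
  constructor
  · refine exists_associated_X_sub_one_pow_of_dvd (n := n) (N := N) ?_ h0
    rw [← hc'.dvd_mul_left, ← mul_assoc, ← key]
    exact (dvd_mul_right _ _).mul_right _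
  · have hdvd : X ^ n ∣ brylNumerator V * (brylNumerator U * (X - 1) ^ r.toNat) :=
      ⟨C (algebraMap R K c) * (X - 1) ^ N, by linear_combination key⟩
    have hcop : IsCoprime (X ^ n) (brylNumerator U * (X - 1) ^ r.toNat) :=
      ((isCoprime_X_of_coeff_zero_ne_zero h0).mul_right isCoprime_X_X_sub_one.pow_right).pow_left
    have hV : brylNumerator V ≠ 0 := by
      rintro hV
      rw [hV, mul_zero, zero_mul] at key
      refine mul_ne_zero (mul_ne_zero hc'.ne_zero (pow_ne_zero _ X_ne_zero))
        (pow_ne_zero _ ?_) key.symm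
      simpa using X_sub_C_ne_zero (1 : K)
    simpa using natDegree_le_of_dvd (hcop.dvd_of_dvd_mul_right hdvd) hV

lemma X_sub_one_dvd_of_degY_eq_zero (hx : U.natDegree ≠ 0) (hy : degY U = 0) {b : ℕ}
    (hb : Associated (brylNumerator U) ((X - 1) ^ b)) : X - 1 ∣ U := by
  have hU0 : U ≠ 0 := by
    rintro rfl
    simp at hx
  have hlc : U.leadingCoeff = C (U.leadingCoeff.coeff 0) :=
    eq_C_of_natDegree_eq_zero (Nat.eq_zero_of_le_zero (hy ▸ natDegree_coeff_le_degY U _))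
  have hQ1 : (brylNumerator U).eval 1 ≠ 0 := by
    rw [eval_one_brylNumerator, hlc, eval_C, map_ne_zero_iff _ (IsFractionRing.injective R K)]
    intro h
    apply leadingCoeff_ne_zero.2 hU0
    rw [hlc, h, map_zero]
  have hQ0 := (natDegree_eq_zero_or_eval_one_eq_zero hb).resolve_right hQ1
  have h1 : (U.eval 1).coeff 0 = 0 := by
    have := coeff_natDegree_brylNumerator_of_degY_eq_zero hy
    rw [coeff_eq_zero_of_natDegree_lt (hQ0 ▸ Nat.pos_of_ne_zero hx)] at this
    exact (map_eq_zero_iff _ (IsFractionRing.injective R K)).1 this.symm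
  have hev : U.eval 1 = 0 := by
    rw [eq_C_of_natDegree_eq_zero (p := U.eval 1)
      (Nat.eq_zero_of_le_zero (hy ▸ natDegree_eval_one_le_degY U)),
      h1, map_zero]
  simpa using dvd_iff_isRoot.2 hev

lemma X_sub_one_dvd_of_associated_brylNumerator_C {p : R[X]} (hp : p.natDegree ≠ 0) {b : ℕ}
    (hb : Associated (brylNumerator (C p)) ((X - 1) ^ b)) : X - 1 ∣ p := by
  rw [brylNumerator_C] at hb
  have := (natDegree_eq_zero_or_eval_one_eq_zero hb).resolve_left
    (by rwa [natDegree_map_eq_of_injective (IsFractionRing.injective R K)])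
  rw [eval_map, eval₂_at_one, map_eq_zero_iff _ (IsFractionRing.injective R K)] at this
  simpa using dvd_iff_isRoot.2 this

lemma IsBrylawski.isScalar_of_mul_eq (hc : c ≠ 0) (hT : IsBrylawski R n r c T)
    (hx1 : ¬ (X - 1 ∣ T)) (hy1 : ¬ (C (X - 1) ∣ T)) (hdeg : T.natDegree + degY T ≤ n + 1)
    (hT0 : T ≠ 0) (hUV : T = U * V) (h00 : (U.coeff 0).coeff 0 ≠ 0) : IsScalar U := by
  obtain ⟨hU0, hV0⟩ := mul_ne_zero_iff.1 (hUV ▸ hT0)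
  have h0 : (brylNumerator U).coeff 0 ≠ 0 := by
    rw [coeff_zero_brylNumerator]
    exact mul_ne_zero (pow_ne_zero _ (neg_ne_zero.2 one_ne_zero))
      ((map_ne_zero_iff _ (IsFractionRing.injective R K)).2 h00)
  obtain ⟨⟨b, hb⟩, hnV⟩ := hT.exists_associated_and_le_natDegree hc hT0 hUV h0
  have hsmall : U.natDegree + degY U ≤ 1 := by
    have := natDegree_brylNumerator_le V
    rw [hUV, natDegree_mul hU0 hV0, degY_mul hU0 hV0] at hdeg
    omega
  have hUT : U ∣ T := ⟨V, hUV⟩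
  by_cases hx : U.natDegree = 0
  · by_cases hy : degY U = 0
    · exact isScalar_of_natDegree_eq_zero_of_degY_eq_zero hx hy
    rw [eq_C_of_natDegree_eq_zero hx] at hb hy hUT
    rw [degY_C] at hy
    exact absurd
      ((_root_.map_dvd C (X_sub_one_dvd_of_associated_brylNumerator_C hy hb)).trans hUT) hy1
  · exact absurd ((X_sub_one_dvd_of_degY_eq_zero hx (by omega) hb).trans hUT) hx1

theorem IsBrylawski.isScalar_or_isScalar_of_mul_eq (hc : c ≠ 0) (hT : IsBrylawski R n r c T)
    (hx1 : ¬ (X - 1 ∣ T)) (hy1 : ¬ (C (X - 1) ∣ T)) (ht10 : (T.coeff 1).coeff 0 ≠ 0)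
    (hdeg : T.natDegree + degY T ≤ n + 1) (hUV : T = U * V) : IsScalar U ∨ IsScalar V := by
  have hT0 : T ≠ 0 := by
    rintro rfl
    simp at ht10
  rw [hUV, coeff_one_coeff_zero_mul] at ht10
  by_cases hU : (U.coeff 0).coeff 0 = 0
  · refine Or.inr (hT.isScalar_of_mul_eq hc hx1 hy1 hdeg hT0 (hUV.trans (mul_comm U V)) ?_)
    rintro hV
    simp [hU, hV] at ht10
  · exact Or.inl (hT.isScalar_of_mul_eq hc hx1 hy1 hdeg hT0 hUV hU)

end Brylawski

section ClearDenominators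

variable {R K : Type*} [CommRing R] [Field K] [Algebra R K] [IsFractionRing R K]

local notation "Φ" => mapRingHom (algebraMap R K)

lemma exists_map_eq_C_C_mul [IsDomain R] (P : K[X][X]) :
    ∃ d : R, d ≠ 0 ∧ ∃ P₀ : R[X][X], P₀.map Φ = C (C (algebraMap R K d)) * P := by
  induction P using Polynomial.induction_on' with
  | add P Q hP hQ =>
    obtain ⟨d₁, hd₁, P₁, hP₁⟩ := hP
    obtain ⟨d₂, hd₂, Q₁, hQ₁⟩ := hQ
    refine ⟨d₁ * d₂, mul_ne_zero hd₁ hd₂, C (C d₂) * P₁ + C (C d₁) * Q₁, ?_⟩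
    simp only [Polynomial.map_add, Polynomial.map_mul, map_C, hP₁, hQ₁, coe_mapRingHom, map_mul]
    ring
  | monomial k p =>
    obtain ⟨d, hd, hp⟩ := IsLocalization.integerNormalization_spec (nonZeroDivisors R) p
    refine ⟨d, nonZeroDivisors.ne_zero hd,
      monomial k (IsLocalization.integerNormalization (nonZeroDivisors R) p), ?_⟩
    rw [map_monomial, coe_mapRingHom, hp, C_mul_monomial, Algebra.smul_def,
      Polynomial.algebraMap_apply]

lemma isUnit_of_map_eq_C_C_mul {A : R[X][X]} {U : K[X][X]} {d : R} (hA : IsScalar A)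
    (hU : U ≠ 0) (hd : d ≠ 0) (h : A.map Φ = C (C (algebraMap R K d)) * U) : IsUnit U := by
  obtain ⟨a, rfl⟩ := hA
  simp only [map_C, coe_mapRingHom] at h
  have ha : algebraMap R K a ≠ 0 := by
    rintro ha
    rw [ha, map_zero, map_zero, eq_comm, mul_eq_zero] at h
    simp [hU, hd] at h
  exact isUnit_of_dvd_unit ⟨C (C (algebraMap R K d)), by rw [h, mul_comm]⟩
    (isUnit_C.2 (isUnit_C.2 ha.isUnit))

theorem irreducible_map_of_forall_isScalar [IsDomain R] [UniqueFactorizationMonoid R]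
    {T : R[X][X]} (hT : T.natDegree ≠ 0) (hfact : ∀ U V, T = U * V → IsScalar U ∨ IsScalar V) :
    Irreducible (T.map Φ) := by
  have hΦ : Function.Injective Φ := map_injective _ (IsFractionRing.injective R K)
  refine ⟨fun hu => hT ?_, fun U V hUV => ?_⟩
  · simpa [natDegree_map_eq_of_injective hΦ] using natDegree_eq_zero_of_isUnit hu
  obtain ⟨hU, hV⟩ := mul_ne_zero_iff.1 (hUV ▸ (Polynomial.map_ne_zero_iff hΦ).2
    (ne_zero_of_natDegree_gt (Nat.pos_of_ne_zero hT)))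
  obtain ⟨dU, hdU, A, hA⟩ := exists_map_eq_C_C_mul (R := R) U
  obtain ⟨dV, hdV, B, hB⟩ := exists_map_eq_C_C_mul (R := R) V
  have hAB : C (C (dU * dV)) * T = A * B := by
    apply map_injective _ hΦ
    simp only [Polynomial.map_mul, hA, hB, hUV, map_C, coe_mapRingHom, map_mul]
    ring
  exact (forall_isScalar_of_C_C_mul_eq hfact _ A B hAB).imp
    (isUnit_of_map_eq_C_C_mul · hU hdU hA) (isUnit_of_map_eq_C_C_mul · hV hdV hB)

end ClearDenominators

theorem brylawski_irreducible_general (R : Type*) [CommRing R] [IsDomain R]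
    [UniqueFactorizationMonoid R] (n : ℕ) (r : ℤ) (c : R) (hc : c ≠ 0)
    (T : Polynomial (Polynomial R)) (hT : IsBrylawski R n r c T)
    (hx1 : ¬ ((Polynomial.X - 1 : Polynomial (Polynomial R)) ∣ T))
    (hy1 : ¬ ((Polynomial.C (Polynomial.X - 1) : Polynomial (Polynomial R)) ∣ T))
    (ht10 : (T.coeff 1).coeff 0 ≠ 0)
    (hdeg : T.natDegree + degY T = n ∨ T.natDegree + degY T = n + 1) :
    (∀ U V : Polynomial (Polynomial R), T = U * V →
        (∃ a : R, U = Polynomial.C (Polynomial.C a)) ∨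
        (∃ a : R, V = Polynomial.C (Polynomial.C a))) ∧
    Irreducible (T.map (Polynomial.mapRingHom (algebraMap R (FractionRing R)))) := by
  have hfact : ∀ U V, T = U * V → IsScalar U ∨ IsScalar V := fun U V hUV =>
    hT.isScalar_or_isScalar_of_mul_eq hc hx1 hy1 ht10 (by omega) hUV
  have hT1 : T.natDegree ≠ 0 := fun h =>
    ht10 (by rw [coeff_eq_zero_of_natDegree_lt (p := T) (n := 1) (by omega), coeff_zero])
  exact ⟨hfact, irreducible_map_of_forall_isScalar hT1 hfact⟩

/-- Let `T = Σ t_{i,j} x^i y^j ∈ R[x,y]` be an (n,r)-Brylawski polynomial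
over a UFD `R` with fraction field `K`, with `r ≥ 1` and `n − r ≥ 1`. If (i) neither
`x − 1` nor `y − 1` divides `T`, (ii) `t_{1,0} ≠ 0`, and (iii)
`deg_x T + deg_y T ∈ {n, n+1}`, then in any factorization `T = U·V` one factor is a
constant (an element of `R`); in particular `T` is irreducible in `K[x,y]`. -/
theorem brylawski_irreducible (R : Type*) [CommRing R] [IsDomain R]
    [UniqueFactorizationMonoid R] (n : ℕ) (r : ℤ) (c : R) (hc : c ≠ 0)
    (T : Polynomial (Polynomial R)) (hT : IsBrylawski R n r c T)
    (hr : 1 ≤ r) (hnr : 1 ≤ (n : ℤ) - r)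
    (hx1 : ¬ ((Polynomial.X - 1 : Polynomial (Polynomial R)) ∣ T))
    (hy1 : ¬ ((Polynomial.C (Polynomial.X - 1) : Polynomial (Polynomial R)) ∣ T))
    (ht10 : (T.coeff 1).coeff 0 ≠ 0)
    (hdeg : T.natDegree + degY T = n ∨ T.natDegree + degY T = n + 1) :
    (∀ U V : Polynomial (Polynomial R), T = U * V →
        (∃ a : R, U = Polynomial.C (Polynomial.C a)) ∨
        (∃ a : R, V = Polynomial.C (Polynomial.C a))) ∧
    Irreducible (T.map (Polynomial.mapRingHom (algebraMap R (FractionRing R)))) :=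
  brylawski_irreducible_general R n r c hc T hT hx1 hy1 ht10 hdeg
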